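/- Let Γ be a curve of class LR with arc-length parametrization z(s), 0 ≤ s ≤ S, let θ = β − α have jumps h_k at points s_k, and let ρ(z(s)) = Π_{k=1}^{m}|s − t_k|^{α_k} with distinct points {t_k} ⊂ (0,S). If the combined exponents β_k = −(p/2π)Σᵢ h_i χ_{T_k}(s_i) + Σᵢ α_i χ_{T_k}(t_i), k = 1,…,l, satisfy −1 < β_k < p/q, then the weight ρ satisfies condition α): there exist p₁, p₂ ∈ (1,∞) such that ∫₀^S σ^{pp₁}(s)ρ^{p₁}(z(s))ds < ∞ and ∫₀^S σ^{−qp₂}(s)ρ^{−(q/p)p₂}(z(s))ds < ∞. -/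

import Mathlib

open Complex MeasureTheory Metric Set Filter Bornology
open scoped Topology

noncomputable section

/-- Stolz-type non-tangential approach region of aperture `α` at the boundary point `ξ`
of the region `D`. -/
def stolzRegion (D : Set ℂ) (ξ : ℂ) (α : ℝ) : Set ℂ :=
  {z ∈ D | dist z ξ < (1 + α) * Metric.infDist z Dᶜ}

/-- `f` has non-tangential limit `L` at the boundary point `ξ` of the region `D`. -/
def NTLim (D : Set ℂ) (f : ℂ → ℂ) (ξ : ℂ) (L : ℂ) : Prop :=
  ∀ α > 0, Filter.Tendsto f (𝓝[stolzRegion D ξ α] ξ) (𝓝 L)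

/-- A closed rectifiable Jordan curve of length `S`, given by its (1-Lipschitz)
arclength parametrization. -/
structure JordanCurve where
  toFun : ℝ → ℂ
  S : ℝ
  S_pos : 0 < S
  lipschitz : LipschitzWith 1 toFun
  injOn : Set.InjOn toFun (Set.Ico 0 S)
  periodic : Function.Periodic toFun S

namespace JordanCurve

/-- the point set of the curve -/
def carrier (Γ : JordanCurve) : Set ℂ := Γ.toFun '' Set.Icc 0 Γ.S

/-- the weighted `L^p(Γ, ρ)`-norm of a function given in the arclength parameter -/
def lpNorm (Γ : JordanCurve) (ρ : ℂ → ℝ) (p : ℝ) (g : ℝ → ℂ) : ℝ :=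
  (∫ s in (0:ℝ)..Γ.S, ‖g s‖ ^ p * ρ (Γ.toFun s)) ^ (1 / p)

/-- membership in the weighted Lebesgue space `L_{p,ρ}(Γ)` -/
def MemLpW (Γ : JordanCurve) (ρ : ℂ → ℝ) (p : ℝ) (g : ℝ → ℂ) : Prop :=
  MeasureTheory.AEStronglyMeasurable g (volume.restrict (Set.Icc 0 Γ.S)) ∧
  MeasureTheory.IntegrableOn (fun s => ‖g s‖ ^ p * ρ (Γ.toFun s)) (Set.Icc 0 Γ.S)

/-- Carleson (regular) curve: `|Γ ∩ O_r(z)| ≤ c r`. -/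
def IsCarleson (Γ : JordanCurve) : Prop :=
  ∃ c : ℝ, ∀ w ∈ Γ.carrier, ∀ r > 0,
    (volume {s : ℝ | s ∈ Set.Icc 0 Γ.S ∧ Γ.toFun s ∈ Metric.ball w r}).toReal ≤ c * r

/-- the Muckenhoupt `A_p(Γ)` condition for a weight on the curve -/
def MuckenhouptOn (Γ : JordanCurve) (ρ : ℂ → ℝ) (p : ℝ) : Prop :=
  ∃ C : ℝ, ∀ w ∈ Γ.carrier, ∀ r > 0,
    (r⁻¹ * ∫ s in {s : ℝ | s ∈ Set.Icc 0 Γ.S ∧ Γ.toFun s ∈ Metric.ball w r}, ρ (Γ.toFun s)) *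
      (r⁻¹ * ∫ s in {s : ℝ | s ∈ Set.Icc 0 Γ.S ∧ Γ.toFun s ∈ Metric.ball w r},
          |ρ (Γ.toFun s)| ^ (-(1:ℝ) / (p - 1))) ^ (p - 1) ≤ C

end JordanCurve

/-- the Muckenhoupt `A_p` condition for a weight on `[-π,π]` (equivalently, on the unit circle) -/
def MuckenhouptT (ν : ℝ → ℝ) (p : ℝ) : Prop :=
  ∃ C : ℝ, ∀ a b : ℝ, -Real.pi ≤ a → a < b → b ≤ Real.pi →
    ((b - a)⁻¹ * ∫ t in a..b, ν t) *
      ((b - a)⁻¹ * ∫ t in a..b, |ν t| ^ (-(1:ℝ) / (p - 1))) ^ (p - 1) ≤ C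

/-- the unbounded complementary region `D⁻` of the bounded region `D⁺` -/
def exteriorRegion (Dp : Set ℂ) : Set ℂ := (closure Dp)ᶜ

/-- `D⁺` is the bounded simply connected region bounded by the curve `Γ` -/
def BoundsRegion (Γ : JordanCurve) (Dp : Set ℂ) : Prop :=
  IsOpen Dp ∧ Bornology.IsBounded Dp ∧ IsConnected Dp ∧ frontier Dp = Γ.carrier

/-- the open unit disc `ω` -/
def unitDisc : Set ℂ := Metric.ball 0 1

/-- the exterior of the closed unit disc -/
def unitDiscExt : Set ℂ := {z : ℂ | 1 < ‖z‖}

/-- membership in the Hardy class `H_p^+` of the unit disc -/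
def MemHardyPlus (p : ℝ) (f : ℂ → ℂ) : Prop :=
  DifferentiableOn ℂ f unitDisc ∧
  ∃ C : ℝ, ∀ r ∈ Set.Ico (0:ℝ) 1,
    (∫ t in (-Real.pi)..Real.pi, ‖f (r * Complex.exp (Complex.I * t))‖ ^ p) ≤ C

/-- `fb t` is, for a.e. `t`, the non-tangential boundary value of `f` at `e^{it}`
from inside the unit disc -/
def HasNTBoundaryIn (f : ℂ → ℂ) (fb : ℝ → ℂ) : Prop :=
  ∀ᵐ (t : ℝ) ∂(volume.restrict (Set.Icc (-Real.pi) Real.pi)),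
    NTLim unitDisc f (Complex.exp (Complex.I * t)) (fb t)

/-- `fb t` is, for a.e. `t`, the non-tangential boundary value of `f` at `e^{it}`
from outside the unit disc -/
def HasNTBoundaryOut (f : ℂ → ℂ) (fb : ℝ → ℂ) : Prop :=
  ∀ᵐ (t : ℝ) ∂(volume.restrict (Set.Icc (-Real.pi) Real.pi)),
    NTLim unitDiscExt f (Complex.exp (Complex.I * t)) (fb t)

/-- the norm of the weighted Lebesgue space `L_{p,ν}(-π,π)` -/
def lpNormT (ν : ℝ → ℝ) (p : ℝ) (g : ℝ → ℂ) : ℝ :=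
  (∫ t in (-Real.pi)..Real.pi, ‖g t‖ ^ p * ν t) ^ (1 / p)

/-- membership in the weighted Lebesgue space `L_{p,ν}(-π,π)` -/
def MemLpT (ν : ℝ → ℝ) (p : ℝ) (g : ℝ → ℂ) : Prop :=
  MeasureTheory.AEStronglyMeasurable g (volume.restrict (Set.Icc (-Real.pi) Real.pi)) ∧
  MeasureTheory.IntegrableOn (fun t => ‖g t‖ ^ p * ν t) (Set.Icc (-Real.pi) Real.pi)

/-- membership of `f`, with boundary values `fb`, in the weighted Hardy space `H⁺_{p,ν}`:
`f ∈ H₁⁺` and the boundary values belong to `L_{p,ν}` -/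
def MemHardyPlusW (p : ℝ) (ν : ℝ → ℝ) (f : ℂ → ℂ) (fb : ℝ → ℂ) : Prop :=
  MemHardyPlus 1 f ∧ HasNTBoundaryIn f fb ∧ MemLpT ν p fb

/-- membership in the Hardy class `ₘH_p⁻`: `f` is analytic outside the unit disc and has a
Laurent expansion `Σ_{k ≤ m} a_k z^k` at infinity, i.e. `f(1/w) = w^{-m} g(w)` with
`g` in the Hardy class of the disc. -/
def MemHardyMinus (p : ℝ) (m : ℤ) (f : ℂ → ℂ) : Prop :=
  DifferentiableOn ℂ f unitDiscExt ∧
  ∃ g : ℂ → ℂ, MemHardyPlus p g ∧ ∀ w ∈ unitDisc, w ≠ 0 → f w⁻¹ = w ^ (-m) * g w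

/-- membership of `f`, with boundary values `fb`, in the weighted Hardy space `ₘH⁻_{p,ν}` -/
def MemHardyMinusW (p : ℝ) (ν : ℝ → ℝ) (m : ℤ) (f : ℂ → ℂ) (fb : ℝ → ℂ) : Prop :=
  MemHardyMinus 1 m f ∧ HasNTBoundaryOut f fb ∧ MemLpT ν p fb

namespace JordanCurve

/-- `fb s` is, for a.e. `s`, the non-tangential boundary value of `f` at `Γ(s)`
relative to the region `D` -/
def HasNTBoundary (Γ : JordanCurve) (D : Set ℂ) (f : ℂ → ℂ) (fb : ℝ → ℂ) : Prop :=
  ∀ᵐ s ∂(volume.restrict (Set.Icc 0 Γ.S)), NTLim D f (Γ.toFun s) (fb s)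

/-- the Cauchy integral over the curve of a density given in the arclength parameter -/
def cauchyIntegral (Γ : JordanCurve) (g : ℝ → ℂ) (z : ℂ) : ℂ :=
  (2 * Real.pi * Complex.I)⁻¹ *
    ∫ s in (0:ℝ)..Γ.S, g s * deriv Γ.toFun s / (Γ.toFun s - z)

/-- membership in the Smirnov class `E₁(D⁺)` together with the boundary values `fb`:
`f` is analytic in `D⁺`, has non-tangential boundary values `fb ∈ L₁(Γ)`, and is
the Cauchy integral of its boundary values. -/
def MemSmirnovPlus (Γ : JordanCurve) (Dp : Set ℂ) (f : ℂ → ℂ) (fb : ℝ → ℂ) : Prop :=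
  DifferentiableOn ℂ f Dp ∧ Γ.HasNTBoundary Dp f fb ∧
  MeasureTheory.IntegrableOn fb (Set.Icc 0 Γ.S) ∧
  ∀ z ∈ Dp, f z = Γ.cauchyIntegral fb z

/-- membership in the Smirnov class `ₘE₁(D⁻)` (Laurent expansion `Σ_{k ≤ m} a_k z^k`
at infinity) together with the boundary values `fb`. -/
def MemSmirnovMinus (Γ : JordanCurve) (Dm : Set ℂ) (m : ℤ) (f : ℂ → ℂ) (fb : ℝ → ℂ) : Prop :=
  DifferentiableOn ℂ f Dm ∧ Γ.HasNTBoundary Dm f fb ∧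
  MeasureTheory.IntegrableOn fb (Set.Icc 0 Γ.S) ∧
  ∃ Q : Polynomial ℂ, (m < 0 → Q = 0) ∧ (0 ≤ m → (Q.natDegree : ℤ) ≤ m) ∧
    ∀ z ∈ Dm, f z = Q.eval z - Γ.cauchyIntegral fb z

/-- membership in the weighted Smirnov class `E_{p,ρ}(D⁺)` -/
def MemSmirnovPlusW (Γ : JordanCurve) (Dp : Set ℂ) (ρ : ℂ → ℝ) (p : ℝ)
    (f : ℂ → ℂ) (fb : ℝ → ℂ) : Prop :=
  Γ.MemSmirnovPlus Dp f fb ∧ Γ.MemLpW ρ p fb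

/-- membership in the weighted Smirnov class `ₘE_{p,ρ}(D⁻)` -/
def MemSmirnovMinusW (Γ : JordanCurve) (Dm : Set ℂ) (ρ : ℂ → ℝ) (p : ℝ) (m : ℤ)
    (f : ℂ → ℂ) (fb : ℝ → ℂ) : Prop :=
  Γ.MemSmirnovMinus Dm m f fb ∧ Γ.MemLpW ρ p fb

end JordanCurve

/-- `φ : D⁻ → {|w|>1}` is the conformal map with `φ(∞) = ∞`, `φ'(∞) = γ > 0`,
and `φinv` is its inverse. -/
structure IsOuterMap (Dp : Set ℂ) (φ φinv : ℂ → ℂ) : Prop where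
  diff : DifferentiableOn ℂ φ (exteriorRegion Dp)
  maps : Set.MapsTo φ (exteriorRegion Dp) unitDiscExt
  diff_inv : DifferentiableOn ℂ φinv unitDiscExt
  maps_inv : Set.MapsTo φinv unitDiscExt (exteriorRegion Dp)
  left_inv : ∀ z ∈ exteriorRegion Dp, φinv (φ z) = z
  right_inv : ∀ w ∈ unitDiscExt, φ (φinv w) = w
  deriv_infty : ∃ γ : ℝ, 0 < γ ∧
    Filter.Tendsto (fun z => φ z / z) (Bornology.cobounded ℂ) (𝓝 (γ : ℂ))

/-- `ψ : D⁺ → {|w|>1}` is the conformal map with `ψ(0) = ∞`, `lim_{z→0} z ψ(z) = α > 0`,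
and `ψinv` is its inverse. -/
structure IsInnerMap (Dp : Set ℂ) (ψ ψinv : ℂ → ℂ) : Prop where
  diff : DifferentiableOn ℂ ψ (Dp \ {0})
  maps : Set.MapsTo ψ (Dp \ {0}) unitDiscExt
  diff_inv : DifferentiableOn ℂ ψinv unitDiscExt
  maps_inv : Set.MapsTo ψinv unitDiscExt (Dp \ {0})
  left_inv : ∀ z ∈ Dp \ {0}, ψinv (ψ z) = z
  right_inv : ∀ w ∈ unitDiscExt, ψ (ψinv w) = w
  pole_zero : ∃ α : ℝ, 0 < α ∧
    Filter.Tendsto (fun z => z * ψ z) (𝓝[≠] (0:ℂ)) (𝓝 (α : ℂ))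

/-- `Fp n` is the generalized `p`-Faber polynomial `F⁺_{p,n}`: the principal part at `∞` of
`φ(z)ⁿ φp(z)`, where `φp` is the analytic branch of `(φ')^{1/p}` positive at infinity. -/
structure IsFaberPlus (Dp : Set ℂ) (p : ℝ) (φ φp : ℂ → ℂ) (Fp : ℕ → Polynomial ℂ) : Prop where
  branch_diff : DifferentiableOn ℂ φp (exteriorRegion Dp)
  branch_abs : ∀ z ∈ exteriorRegion Dp, ‖φp z‖ = ‖deriv φ z‖ ^ (1 / p)
  branch_infty : ∃ c : ℝ, 0 < c ∧
    Filter.Tendsto φp (Bornology.cobounded ℂ) (𝓝 (c : ℂ))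
  principal : ∀ n : ℕ, Filter.Tendsto
    (fun z => φ z ^ n * φp z - (Fp n).eval z) (Bornology.cobounded ℂ) (𝓝 0)
  degree_le : ∀ n, (Fp n).natDegree ≤ n
  zeroth : Fp 0 = 1

/-- `Fm n` encodes the generalized `p`-Faber polynomial `F⁻_{p,n}` (a polynomial in `z⁻¹`
without constant term, evaluated as `(Fm n).eval z⁻¹`): the principal part at `0` of
`G n = ψ^{n-2/p} (ψ')^{1/p}`. -/
structure IsFaberMinus (Dp : Set ℂ) (p : ℝ) (ψ : ℂ → ℂ) (G : ℕ → ℂ → ℂ)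
    (Fm : ℕ → Polynomial ℂ) : Prop where
  branch_diff : ∀ n, DifferentiableOn ℂ (G n) (Dp \ {0})
  branch_abs : ∀ n, ∀ z ∈ Dp \ {0},
    ‖G n z‖ = ‖ψ z‖ ^ ((n : ℝ) - 2 / p) * ‖deriv ψ z‖ ^ (1 / p)
  principal : ∀ n : ℕ, ∃ L : ℂ,
    Filter.Tendsto (fun z => G n z - (Fm n).eval z⁻¹) (𝓝[≠] (0:ℂ)) (𝓝 L)
  degree_le : ∀ n, (Fm n).natDegree ≤ n
  no_const : ∀ n, (Fm n).coeff 0 = 0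

namespace JordanCurve

/-- the system `{F⁺_{p,n}}_{n ∈ ℤ₊}` is a (Schauder) basis of `E_{p,ρ}(D⁺)`:
every member has a unique norm-convergent expansion. -/
def FaberPlusBasis (Γ : JordanCurve) (Dp : Set ℂ) (ρ : ℂ → ℝ) (p : ℝ)
    (Fp : ℕ → Polynomial ℂ) : Prop :=
  ∀ f fb, Γ.MemSmirnovPlusW Dp ρ p f fb →
    ∃! a : ℕ → ℂ,
      Filter.Tendsto (fun N : ℕ => Γ.lpNorm ρ p
          (fun s => fb s - ∑ n ∈ Finset.range N, a n * (Fp n).eval (Γ.toFun s)))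
        Filter.atTop (𝓝 0)

/-- the system `{F⁻_{p,n}}_{n ∈ ℕ}` is a (Schauder) basis of `₋₁E_{p,ρ}(D⁻)` -/
def FaberMinusBasis (Γ : JordanCurve) (Dp : Set ℂ) (ρ : ℂ → ℝ) (p : ℝ)
    (Fm : ℕ → Polynomial ℂ) : Prop :=
  ∀ f fb, Γ.MemSmirnovMinusW (exteriorRegion Dp) ρ p (-1) f fb →
    ∃! a : ℕ → ℂ, a 0 = 0 ∧
      Filter.Tendsto (fun N : ℕ => Γ.lpNorm ρ p
          (fun s => fb s - ∑ n ∈ Finset.Icc 1 N, a n * (Fm n).eval ((Γ.toFun s)⁻¹)))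
        Filter.atTop (𝓝 0)

/-- a double system `{u_n ; v_k}_{n ≥ 0, k ≥ 1}` of functions on the curve is a basis of
`L_{p,ρ}(Γ)`: every member has a unique norm-convergent double expansion. -/
def DoubleBasis (Γ : JordanCurve) (ρ : ℂ → ℝ) (p : ℝ) (u v : ℕ → ℝ → ℂ) : Prop :=
  ∀ fb, Γ.MemLpW ρ p fb →
    ∃! c : (ℕ → ℂ) × (ℕ → ℂ), c.2 0 = 0 ∧
      Filter.Tendsto (fun NM : ℕ × ℕ => Γ.lpNorm ρ p
          (fun s => fb s - ∑ n ∈ Finset.range NM.1, c.1 n * u n s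
            - ∑ k ∈ Finset.Icc 1 NM.2, c.2 k * v k s))
        Filter.atTop (𝓝 0)

end JordanCurve

/-- jump data of a piecewise continuous function `θ` on `[0,S]`: the interior discontinuity
points are `sk i`, `1 ≤ i ≤ r`, with jumps `h i`; `h 0` is the jump at the endpoint
(`sk 0 = 0`). -/
structure HasJumpData (θ : ℝ → ℝ) (S : ℝ) (r : ℕ) (sk h : ℕ → ℝ) : Prop where
  sk_zero : sk 0 = 0
  mem : ∀ i, 1 ≤ i → i ≤ r → sk i ∈ Set.Ioo 0 S
  mono : ∀ i j, 1 ≤ i → i < j → j ≤ r → sk i < sk j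
  cont : ContinuousOn θ ((Set.Ioo 0 S) \ {x | ∃ i, 1 ≤ i ∧ i ≤ r ∧ sk i = x})
  jump : ∀ i, 1 ≤ i → i ≤ r → ∃ L : ℝ,
    Filter.Tendsto θ (𝓝[<] (sk i)) (𝓝 L) ∧ Filter.Tendsto θ (𝓝[>] (sk i)) (𝓝 (L + h i))
  jump_end : ∃ L : ℝ,
    Filter.Tendsto θ (𝓝[<] S) (𝓝 L) ∧ Filter.Tendsto θ (𝓝[>] (0:ℝ)) (𝓝 (L + h 0))

/-- `σ(s) = |z(0)-z(s)|^{-h₀/2π} Π_k |z(s_k)-z(s)|^{-h_k/2π}` -/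
def sigmaWeight (Γ : JordanCurve) (r : ℕ) (sk h : ℕ → ℝ) (s : ℝ) : ℝ :=
  ∏ k ∈ Finset.range (r + 1),
    ‖Γ.toFun (sk k) - Γ.toFun s‖ ^ (-(h k) / (2 * Real.pi))

/-- condition α): `σ^{p p₁} ρ^{p₁}` and `σ^{-q p₂} ρ^{-(q/p) p₂}` are integrable for some
`p₁, p₂ ∈ (1,∞)`. -/
def CondAlpha (Γ : JordanCurve) (ρ : ℂ → ℝ) (p q : ℝ) (r : ℕ) (sk h : ℕ → ℝ) : Prop :=
  ∃ p₁ p₂ : ℝ, 1 < p₁ ∧ 1 < p₂ ∧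
    MeasureTheory.IntegrableOn
      (fun s => sigmaWeight Γ r sk h s ^ (p * p₁) * ρ (Γ.toFun s) ^ p₁)
      (Set.Icc 0 Γ.S) ∧
    MeasureTheory.IntegrableOn
      (fun s => sigmaWeight Γ r sk h s ^ (-(q * p₂)) * ρ (Γ.toFun s) ^ (-(q / p) * p₂))
      (Set.Icc 0 Γ.S)

/-- conditions i)–ii) on the coefficients `A = |A|e^{iα}`, `B = |B|e^{iβ}`:
moduli essentially bounded above and away from zero, arguments piecewise continuous;
`θ = β - α` has jump data `(r, sk, h)`. -/
structure AdmissibleCoeffs (Γ : JordanCurve) (A B : ℂ → ℂ) (aArg bArg : ℝ → ℝ)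
    (r : ℕ) (sk h : ℕ → ℝ) : Prop where
  bddA : ∃ C : ℝ, 0 < C ∧ ∀ s ∈ Set.Icc 0 Γ.S,
    ‖A (Γ.toFun s)‖ ≤ C ∧ C⁻¹ ≤ ‖A (Γ.toFun s)‖
  bddB : ∃ C : ℝ, 0 < C ∧ ∀ s ∈ Set.Icc 0 Γ.S,
    ‖B (Γ.toFun s)‖ ≤ C ∧ C⁻¹ ≤ ‖B (Γ.toFun s)‖
  argA : ∀ s ∈ Set.Icc 0 Γ.S,
    A (Γ.toFun s) = (‖A (Γ.toFun s)‖ : ℂ) * Complex.exp (Complex.I * aArg s)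
  argB : ∀ s ∈ Set.Icc 0 Γ.S,
    B (Γ.toFun s) = (‖B (Γ.toFun s)‖ : ℂ) * Complex.exp (Complex.I * bArg s)
  jumps : HasJumpData (fun s => bArg s - aArg s) Γ.S r sk h

/-- the canonical solution `Z(z)` of the homogeneous Riemann problem with coefficients
`A`, `B` and jump function `θ = β - α`. -/
def canonicalSolution (Γ : JordanCurve) (A B : ℂ → ℂ) (θ : ℝ → ℝ) (z : ℂ) : ℂ :=
  Complex.exp ((2 * Real.pi * Complex.I)⁻¹ *
      ∫ s in (0:ℝ)..Γ.S,
        (Real.log ‖B (Γ.toFun s) / A (Γ.toFun s)‖ : ℂ) *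
          deriv Γ.toFun s / (Γ.toFun s - z)) *
  Complex.exp (((2 * Real.pi : ℝ) : ℂ)⁻¹ *
      ∫ s in (0:ℝ)..Γ.S, (θ s : ℂ) * deriv Γ.toFun s / (Γ.toFun s - z))

namespace JordanCurve

/-- `(F⁺, F⁻)` with boundary values `(fbp, fbm)` is a solution of the homogeneous Riemann
problem `A F⁺ + B F⁻ = 0` a.e. on `Γ` in the class `E_{p,ρ}(D⁺) × ₘE_{p,ρ}(D⁻)`. -/
def SolvesHomRiemann (Γ : JordanCurve) (Dp : Set ℂ) (ρ : ℂ → ℝ) (p : ℝ) (m : ℤ)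
    (A B : ℂ → ℂ) (F G : ℂ → ℂ) (fbp fbm : ℝ → ℂ) : Prop :=
  Γ.MemSmirnovPlusW Dp ρ p F fbp ∧
  Γ.MemSmirnovMinusW (exteriorRegion Dp) ρ p m G fbm ∧
  ∀ᵐ s ∂(volume.restrict (Set.Icc 0 Γ.S)),
    A (Γ.toFun s) * fbp s + B (Γ.toFun s) * fbm s = 0

/-- `(F⁺, F⁻)` with boundary values `(fbp, fbm)` is a solution of the Riemann problem
`F⁺ - D F⁻ = g` a.e. on `Γ` in the class `E_{p,ρ}(D⁺) × ₘE_{p,ρ}(D⁻)`. -/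
def SolvesRiemann (Γ : JordanCurve) (Dp : Set ℂ) (ρ : ℂ → ℝ) (p : ℝ) (m : ℤ)
    (Dd : ℝ → ℂ) (g : ℝ → ℂ) (F G : ℂ → ℂ) (fbp fbm : ℝ → ℂ) : Prop :=
  Γ.MemSmirnovPlusW Dp ρ p F fbp ∧
  Γ.MemSmirnovMinusW (exteriorRegion Dp) ρ p m G fbm ∧
  ∀ᵐ s ∂(volume.restrict (Set.Icc 0 Γ.S)), fbp s - Dd s * fbm s = g s

end JordanCurve

/-- the particular solution `F₁(z) = (Z(z)/2πi) ∫_Γ g(ξ)/(Z⁺(ξ)(ξ-z)) dξ` of the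
non-homogeneous Riemann problem, where `Zbp` is the boundary values of the canonical
solution. -/
def particularSolution (Γ : JordanCurve) (A B : ℂ → ℂ) (θ : ℝ → ℝ) (Zbp : ℝ → ℂ)
    (g : ℝ → ℂ) (z : ℂ) : ℂ :=
  canonicalSolution Γ A B θ z * ((2 * Real.pi * Complex.I)⁻¹ *
    ∫ s in (0:ℝ)..Γ.S, g s * deriv Γ.toFun s / (Zbp s * (Γ.toFun s - z)))

/-- `ρ` is a power weight `ρ(z(s)) = Π_{k=1}^{mw} |s - t_k|^{α_k}` with distinct points
`t_k ∈ (0,S)`. -/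
def IsPowerWeight (Γ : JordanCurve) (ρ : ℂ → ℝ) (mw : ℕ) (tk ak : ℕ → ℝ) : Prop :=
  (∀ i, 1 ≤ i → i ≤ mw → tk i ∈ Set.Ioo 0 Γ.S) ∧
  (∀ i j, 1 ≤ i → i < j → j ≤ mw → tk i ≠ tk j) ∧
  ∀ s ∈ Set.Icc 0 Γ.S, ρ (Γ.toFun s) = ∏ k ∈ Finset.Icc 1 mw, |s - tk k| ^ ak k

/-- the combined exponent `β_k = -(p/2π) Σᵢ h_i χ_{T_k}(s_i) + Σᵢ α_i χ_{T_k}(t_i)`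
at the point `τ` -/
def betaExp (p : ℝ) (r : ℕ) (sk h : ℕ → ℝ) (mw : ℕ) (tk ak : ℕ → ℝ) (τ : ℝ) : ℝ :=
  -(p / (2 * Real.pi)) * (∑ i ∈ Finset.range (r + 1), if sk i = τ then h i else 0) +
    ∑ i ∈ Finset.Icc 1 mw, if tk i = τ then ak i else 0

/-- condition (4.5): `-1 < β_k < p/q` at every combined singular point -/
def BetaCond (p q : ℝ) (r : ℕ) (sk h : ℕ → ℝ) (mw : ℕ) (tk ak : ℕ → ℝ) : Prop :=
  ∀ τ : ℝ, ((∃ i ≤ r, sk i = τ) ∨ (∃ i, 1 ≤ i ∧ i ≤ mw ∧ tk i = τ)) →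
    -1 < betaExp p r sk h mw tk ak τ ∧ betaExp p r sk h mw tk ak τ < p / q

/-- a piecewise Lyapunov curve: finitely many arcs on each of which the tangent
direction angle is Hölder continuous -/
def IsPiecewiseLyapunov (Γ : JordanCurve) : Prop :=
  ∃ (k : ℕ) (σ : ℕ → ℝ), σ 0 = 0 ∧ σ k = Γ.S ∧
    (∀ i j, i < j → j ≤ k → σ i < σ j) ∧
    ∀ i < k, ∃ (θ : ℝ → ℝ) (μ L : ℝ), 0 < μ ∧ μ ≤ 1 ∧ 0 ≤ L ∧
      (∀ s ∈ Set.Ioo (σ i) (σ (i + 1)),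
        deriv Γ.toFun s = Complex.exp (Complex.I * θ s)) ∧
      ∀ s t, s ∈ Set.Ioo (σ i) (σ (i + 1)) → t ∈ Set.Ioo (σ i) (σ (i + 1)) →
        |θ s - θ t| ≤ L * |s - t| ^ μ

/-- a Radon curve (bounded rotation): the tangent direction angle has bounded variation -/
def IsRadon (Γ : JordanCurve) : Prop :=
  ∃ θ : ℝ → ℝ, BoundedVariationOn θ (Set.Icc 0 Γ.S) ∧
    ∀ᵐ s ∂(volume.restrict (Set.Icc 0 Γ.S)),
      deriv Γ.toFun s = Complex.exp (Complex.I * θ s)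

/-- the class `LR`: piecewise Lyapunov or Radon curves -/
def JordanCurve.IsLR (Γ : JordanCurve) : Prop := IsPiecewiseLyapunov Γ ∨ IsRadon Γ

/-- the operator `T_p⁺`: `(T_p⁺ f)(z) = (1/2πi) ∫_{∂ω} f(ξ) [φ₋₁'(ξ)]^{1/q} / (φ₋₁(ξ) - z) dξ`,
written in terms of the boundary values `fb` of `f`, the boundary values `φinvb` of `φ₋₁`
and the boundary branch `kq` of `[φ₋₁']^{1/q}`. -/
def TpPlus (φinvb kq : ℝ → ℂ) (fb : ℝ → ℂ) (z : ℂ) : ℂ :=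
  (2 * Real.pi * Complex.I)⁻¹ *
    ∫ t in (-Real.pi)..Real.pi,
      fb t * kq t / (φinvb t - z) * (Complex.I * Complex.exp (Complex.I * t))

/-- the operator `T_p⁻` on boundary values:
`[T_p⁻ f](z) = (1/2πi) ∫_{|w|=1} f⁻(w⁻¹) [ψ₋₁'(w)]^{1-1/p} w^{-2/p} (ψ₋₁(w)-z)⁻¹ dw`,
where `ψinvb` are the boundary values of `ψ₋₁` and `k1` is the boundary branch of
`[ψ₋₁']^{1-1/p}`. -/
def TpMinus (p : ℝ) (ψinvb k1 : ℝ → ℂ) (fb : ℝ → ℂ) (z : ℂ) : ℂ :=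
  (2 * Real.pi * Complex.I)⁻¹ *
    ∫ t in (-Real.pi)..Real.pi,
      fb (-t) * k1 t * Complex.exp (-(2 / p : ℝ) * Complex.I * t) / (ψinvb t - z) *
        (Complex.I * Complex.exp (Complex.I * t))

end

/-!
Near every parameter `τ`, a curve of class `LR` has an almost constant tangent direction on each
side of `τ`: on a Lyapunov arc the tangent angle is Hölder continuous, and a tangent angle of
bounded variation has one-sided limits. Integrating the derivative against that direction gives
`|z(τ) - z(s)| ≍ |s - τ|`. Hence near `τ` every factor of `σ^{pλ} ρ^λ` is `O(|s - τ|^c)`, with `c`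
its exponent if the factor vanishes at `τ` and `c = 0` otherwise; at a singular point these `c`
add up to `λ β_k`. There are finitely many `β_k`, all in `(-1, p/q)`, so some `λ > 1` keeps every
`λ β_k` in `(-1, p/q)`. With `p₁ = p₂ = λ` both integrands are then `O(|s - τ|^e)` with `e > -1`
near every point of the compact interval `[0, S]`, hence integrable.
-/

open Asymptotics
open scoped NNReal

theorem Nat.exists_lt_not_and_succ {P : ℕ → Prop} {k : ℕ} (h0 : ¬P 0) (hk : P k) :
    ∃ i < k, ¬P i ∧ P (i + 1) := by
  induction k with
  | zero => exact absurd hk h0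
  | succ n ih =>
    by_cases hn : P n
    · obtain ⟨i, hi, h⟩ := ih hn
      exact ⟨i, by omega, h⟩
    · exact ⟨n, by omega, hn, hk⟩

theorem exists_pos_abs_sub_le_of_abs_sub_le_mul_rpow {θ : ℝ → ℝ} {s : Set ℝ} {L μ ε : ℝ}
    (hL : 0 ≤ L) (hμ : 0 < μ) (hε : 0 < ε)
    (h : ∀ x y, x ∈ s → y ∈ s → |θ x - θ y| ≤ L * |x - y| ^ μ) :
    ∃ δ > 0, ∀ x y, x ∈ s → y ∈ s → |x - y| ≤ δ → |θ x - θ y| ≤ ε := by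
  have hεL : 0 < ε / (L + 1) := by positivity
  refine ⟨(ε / (L + 1)) ^ μ⁻¹, by positivity, fun x y hx hy hxy => ?_⟩
  have hpow : |x - y| ^ μ ≤ ε / (L + 1) := by
    calc |x - y| ^ μ ≤ ((ε / (L + 1)) ^ μ⁻¹) ^ μ := by gcongr
      _ = ε / (L + 1) := Real.rpow_inv_rpow hεL.le hμ.ne'
  calc |θ x - θ y| ≤ L * (ε / (L + 1)) := (h x y hx hy).trans (by gcongr)
    _ ≤ ε := by
      rw [mul_div_assoc', div_le_iff₀ (by positivity)]
      nlinarith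

theorem norm_exp_I_mul_ofReal_sub_exp_I_mul_ofReal_le (x y : ℝ) :
    ‖exp (I * x) - exp (I * y)‖ ≤ |x - y| := by
  have : exp (I * x) - exp (I * y) = exp (I * y) * (exp (I * ↑(x - y)) - 1) := by
    rw [mul_sub, ← exp_add]; push_cast; ring_nf
  rw [this, norm_mul, norm_exp_I_mul_ofReal, one_mul]
  exact Real.norm_exp_I_mul_ofReal_sub_one_le

def TangentNearlyConstOn (z : ℝ → ℂ) (s : Set ℝ) : Prop :=
  ∃ α : ℝ, ∀ᵐ t ∂volume.restrict s, ‖deriv z t - exp (I * α)‖ ≤ 1 / 2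

theorem tangentNearlyConstOn_of_angle {z : ℝ → ℂ} {θ : ℝ → ℝ} {s : Set ℝ} {α : ℝ}
    (hz : ∀ᵐ t ∂volume.restrict s, deriv z t = exp (I * θ t))
    (hθ : ∀ᵐ t ∂volume.restrict s, |θ t - α| ≤ 1 / 2) : TangentNearlyConstOn z s :=
  ⟨α, by filter_upwards [hz, hθ] with t hzt hθt
         exact hzt ▸ (norm_exp_I_mul_ofReal_sub_exp_I_mul_ofReal_le _ _).trans hθt⟩

theorem TangentNearlyConstOn.half_sub_le_norm_sub {z : ℝ → ℂ} {K : ℝ≥0} (hz : LipschitzWith K z)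
    {a b : ℝ} (h : TangentNearlyConstOn z (Ioo a b)) {s s' : ℝ} (has : a ≤ s) (hss' : s ≤ s')
    (hs'b : s' ≤ b) : (s' - s) / 2 ≤ ‖z s' - z s‖ := by
  obtain ⟨α, hα⟩ := h
  set u := exp (I * α)
  have hu : ‖u‖ = 1 := norm_exp_I_mul_ofReal α
  -- the component of `z` along `u` is absolutely continuous with derivative `≥ 1/2` a.e.
  set L : ℂ →L[ℝ] ℝ := reCLM.comp (ContinuousLinearMap.mul ℝ ℂ (starRingEnd ℂ u))
  have hL : ∀ w, L w = ((starRingEnd ℂ) u * w).re := fun w => rfl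
  have hg : AbsolutelyContinuousOnInterval (L ∘ z) s s' :=
    ((L.lipschitz.comp hz).lipschitzOnWith).absolutelyContinuousOnInterval
  have hderiv : ∀ᵐ t ∂volume.restrict (Icc s s'), 1 / 2 ≤ deriv (L ∘ z) t := by
    have hsub : Icc s s' =ᵐ[volume] Ioo s s' := Ioo_ae_eq_Icc.symm
    rw [Measure.restrict_congr_set hsub]
    filter_upwards [ae_restrict_of_ae_restrict_of_subset (Ioo_subset_Ioo has hs'b) hα,
      ae_restrict_of_ae hz.ae_differentiableAt_real] with t ht hdiff
    rw [(L.hasFDerivAt.comp_hasDerivAt t hdiff.hasDerivAt).deriv, hL]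
    have h1 : (starRingEnd ℂ) u * deriv z t = 1 + (starRingEnd ℂ) u * (deriv z t - u) := by
      rw [mul_sub, conj_mul', hu]; push_cast; ring
    have h2 := re_le_norm ((starRingEnd ℂ) u * -(deriv z t - u))
    rw [norm_mul, norm_neg, RCLike.norm_conj, hu, one_mul, mul_neg, neg_re] at h2
    rw [h1, add_re, one_re]
    linarith
  have hftc := hg.integral_deriv_eq_sub
  have hlow : ∫ t in s..s', (1 / 2 : ℝ) ≤ ∫ t in s..s', deriv (L ∘ z) t :=
    intervalIntegral.integral_mono_ae_restrict hss' intervalIntegrable_const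
      hg.intervalIntegrable_deriv hderiv
  have hup : (L ∘ z) s' - (L ∘ z) s ≤ ‖z s' - z s‖ := by
    simp only [Function.comp_apply, hL, ← sub_re, ← mul_sub]
    exact (re_le_norm _).trans (by rw [norm_mul, RCLike.norm_conj, hu, one_mul])
  rw [intervalIntegral.integral_const, smul_eq_mul, hftc] at hlow
  linarith

theorem IsPiecewiseLyapunov.exists_tangentNearlyConstOn {Γ : JordanCurve}
    (hΓ : IsPiecewiseLyapunov Γ) {τ : ℝ} :
    (τ ∈ Ico 0 Γ.S → ∃ δ > 0, TangentNearlyConstOn Γ.toFun (Ioo τ (τ + δ))) ∧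
    (τ ∈ Ioc 0 Γ.S → ∃ δ > 0, TangentNearlyConstOn Γ.toFun (Ioo (τ - δ) τ)) := by
  obtain ⟨k, σ, hσ0, hσk, -, harc⟩ := hΓ
  have piece : ∀ i < k, ∃ δ > 0, ∀ a b, σ i ≤ a → a < b → b ≤ σ (i + 1) → b - a ≤ δ →
      TangentNearlyConstOn Γ.toFun (Ioo a b) := by
    intro i hi
    obtain ⟨θ, μ, L, hμ, -, hL, hderiv, hθ⟩ := harc i hi
    obtain ⟨δ, hδ, hθδ⟩ := exists_pos_abs_sub_le_of_abs_sub_le_mul_rpow hL hμ one_half_pos hθ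
    refine ⟨δ, hδ, fun a b ha hab hb hba => ?_⟩
    have hsub : Ioo a b ⊆ Ioo (σ i) (σ (i + 1)) := Ioo_subset_Ioo ha hb
    have hmid : (a + b) / 2 ∈ Ioo a b := ⟨by linarith, by linarith⟩
    refine tangentNearlyConstOn_of_angle (θ := θ) (α := θ ((a + b) / 2))
      ((ae_restrict_mem measurableSet_Ioo).mono fun t ht => hderiv t (hsub ht))
      ((ae_restrict_mem measurableSet_Ioo).mono fun t ht => hθδ _ _ (hsub ht) (hsub hmid) ?_)
    rw [abs_le]
    constructor <;> linarith [ht.1, ht.2]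
  constructor
  · rintro ⟨h0, hS⟩
    obtain ⟨i, hik, hi, hi1⟩ := Nat.exists_lt_not_and_succ (P := fun n => τ < σ n) (k := k)
      (by simpa [hσ0] using h0) (by simpa [hσk] using hS)
    obtain ⟨δ, hδ, h⟩ := piece i hik
    have hτ : 0 < σ (i + 1) - τ := sub_pos.2 hi1
    refine ⟨min δ (σ (i + 1) - τ), lt_min hδ hτ, h _ _ (not_lt.1 hi) ?_ ?_ ?_⟩
    · linarith [lt_min hδ hτ]
    · linarith [min_le_right δ (σ (i + 1) - τ)]
    · linarith [min_le_left δ (σ (i + 1) - τ)]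
  · rintro ⟨h0, hS⟩
    obtain ⟨i, hik, hi, hi1⟩ := Nat.exists_lt_not_and_succ (P := fun n => τ ≤ σ n) (k := k)
      (by simpa [hσ0] using h0) (by simpa [hσk] using hS)
    obtain ⟨δ, hδ, h⟩ := piece i hik
    have hτ : 0 < τ - σ i := sub_pos.2 (not_le.1 hi)
    refine ⟨min δ (τ - σ i), lt_min hδ hτ, h _ _ ?_ ?_ hi1 ?_⟩
    · linarith [min_le_right δ (τ - σ i)]
    · linarith [lt_min hδ hτ]
    · linarith [min_le_left δ (τ - σ i)]

theorem IsRadon.exists_tangentNearlyConstOn {Γ : JordanCurve} (hΓ : IsRadon Γ) {τ : ℝ} :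
    (τ ∈ Ico 0 Γ.S → ∃ δ > 0, TangentNearlyConstOn Γ.toFun (Ioo τ (τ + δ))) ∧
    (τ ∈ Ioc 0 Γ.S → ∃ δ > 0, TangentNearlyConstOn Γ.toFun (Ioo (τ - δ) τ)) := by
  obtain ⟨θ, hθ, hderiv⟩ := hΓ
  constructor
  · rintro ⟨h0, hS⟩
    obtain ⟨l, hl⟩ := hθ.exists_tendsto_right τ
    obtain ⟨δ, hδ, hθl⟩ := Metric.tendsto_nhdsWithin_nhds.1 hl (1 / 2) one_half_pos
    have hτ : 0 < Γ.S - τ := sub_pos.2 hS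
    have hsub : Ioo τ (τ + min δ (Γ.S - τ)) ⊆ Icc 0 Γ.S ∩ Ioi τ := fun t ht =>
      ⟨⟨by linarith [ht.1], by linarith [ht.2, min_le_right δ (Γ.S - τ)]⟩, ht.1⟩
    refine ⟨min δ (Γ.S - τ), lt_min hδ hτ, tangentNearlyConstOn_of_angle (θ := θ) (α := l)
      (ae_restrict_of_ae_restrict_of_subset (hsub.trans inter_subset_left) hderiv)
      ((ae_restrict_mem measurableSet_Ioo).mono fun t ht => (hθl (hsub ht) ?_).le)⟩
    rw [Real.dist_eq, abs_lt]
    constructor <;> linarith [ht.1, ht.2, min_le_left δ (Γ.S - τ)]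
  · rintro ⟨h0, hS⟩
    obtain ⟨l, hl⟩ := hθ.exists_tendsto_left τ
    obtain ⟨δ, hδ, hθl⟩ := Metric.tendsto_nhdsWithin_nhds.1 hl (1 / 2) one_half_pos
    have hsub : Ioo (τ - min δ τ) τ ⊆ Icc 0 Γ.S ∩ Iio τ := fun t ht =>
      ⟨⟨by linarith [ht.1, min_le_right δ τ], by linarith [ht.2]⟩, ht.2⟩
    refine ⟨min δ τ, lt_min hδ h0, tangentNearlyConstOn_of_angle (θ := θ) (α := l)
      (ae_restrict_of_ae_restrict_of_subset (hsub.trans inter_subset_left) hderiv)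
      ((ae_restrict_mem measurableSet_Ioo).mono fun t ht => (hθl (hsub ht) ?_).le)⟩
    rw [Real.dist_eq, abs_lt]
    constructor <;> linarith [ht.1, ht.2, min_le_left δ τ]

namespace JordanCurve

theorem IsLR.exists_tangentNearlyConstOn {Γ : JordanCurve} (hΓ : Γ.IsLR) {τ : ℝ} :
    (τ ∈ Ico 0 Γ.S → ∃ δ > 0, TangentNearlyConstOn Γ.toFun (Ioo τ (τ + δ))) ∧
    (τ ∈ Ioc 0 Γ.S → ∃ δ > 0, TangentNearlyConstOn Γ.toFun (Ioo (τ - δ) τ)) :=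
  hΓ.elim (·.exists_tangentNearlyConstOn) (·.exists_tangentNearlyConstOn)

theorem IsLR.isTheta_norm_sub {Γ : JordanCurve} (hΓ : Γ.IsLR) {τ : ℝ} (hτ : τ ∈ Icc 0 Γ.S) :
    (fun s => ‖Γ.toFun τ - Γ.toFun s‖) =Θ[𝓝[Icc 0 Γ.S] τ] fun s => |s - τ| := by
  have hright : ∀ᶠ s in 𝓝[Icc 0 Γ.S] τ, τ ≤ s → s - τ ≤ 2 * ‖Γ.toFun τ - Γ.toFun s‖ := by
    rcases hτ.2.lt_or_eq with hτS | hτS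
    · obtain ⟨δ, hδ, h⟩ := hΓ.exists_tangentNearlyConstOn.1 ⟨hτ.1, hτS⟩
      filter_upwards [nhdsWithin_le_nhds (eventually_lt_nhds (by linarith : τ < τ + δ))]
        with s hs hτs
      have := h.half_sub_le_norm_sub Γ.lipschitz le_rfl hτs hs.le
      rw [norm_sub_rev]
      linarith
    · filter_upwards [self_mem_nhdsWithin] with s hs hτs
      simp [le_antisymm (hτS ▸ hs.2) hτs]
  have hleft : ∀ᶠ s in 𝓝[Icc 0 Γ.S] τ, s ≤ τ → τ - s ≤ 2 * ‖Γ.toFun τ - Γ.toFun s‖ := by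
    rcases hτ.1.lt_or_eq with h0τ | h0τ
    · obtain ⟨δ, hδ, h⟩ := hΓ.exists_tangentNearlyConstOn.2 ⟨h0τ, hτ.2⟩
      filter_upwards [nhdsWithin_le_nhds (eventually_gt_nhds (by linarith : τ - δ < τ))]
        with s hs hsτ
      have := h.half_sub_le_norm_sub Γ.lipschitz hs.le hsτ le_rfl
      linarith
    · filter_upwards [self_mem_nhdsWithin] with s hs hsτ
      simp [le_antisymm hsτ (h0τ ▸ hs.1)]
  refine ⟨IsBigO.of_bound 1 (Eventually.of_forall fun s => ?_), IsBigO.of_bound 2 ?_⟩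
  · simpa [dist_eq_norm, Real.dist_eq, abs_sub_comm] using Γ.lipschitz.dist_le_mul τ s
  · filter_upwards [hright, hleft] with s h1 h2
    rw [Real.norm_eq_abs, abs_abs, norm_norm]
    rcases le_total τ s with h | h
    · rw [abs_of_nonneg (sub_nonneg.2 h)]; exact h1 h
    · rw [abs_of_nonpos (sub_nonpos.2 h), neg_sub]; exact h2 h

end JordanCurve

theorem integrableAtFilter_abs_sub_rpow {E : ℝ} (hE : -1 < E) (τ : ℝ) :
    IntegrableAtFilter (fun s => |s - τ| ^ E) (𝓝 τ) := by
  have h0 : IntegrableOn (fun x : ℝ => ‖x‖ ^ E) (ball 0 1) :=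
    integrableOn_ball_of_norm_le_rpow (μ := volume) (C := 1) (α := -E) (by simp) (by simp; linarith)
      (Eventually.of_forall fun x => by simp [abs_of_nonneg (Real.rpow_nonneg (abs_nonneg x) E)])
      (measurable_norm.pow_const E).aestronglyMeasurable
  refine ⟨ball τ 1, ball_mem_nhds τ one_pos, ?_⟩
  have := ((measurePreserving_sub_right volume τ).integrableOn_comp_preimage
    (MeasurableEquiv.subRight τ).measurableEmbedding).2 h0
  have hball : (fun x => x - τ) ⁻¹' ball 0 1 = ball τ 1 := by ext; simp [Real.dist_eq]
  simpa [hball, Function.comp_def] using this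

theorem rpow_isBigO_abs_sub_rpow {φ : ℝ → ℝ} {l : Filter ℝ} {τ c : ℝ} (hl : l ≤ 𝓝 τ)
    (hφ : ContinuousAt φ τ) (hφ0 : 0 ≤ φ) (hzero : φ τ = 0 → φ =Θ[l] fun s => |s - τ|) :
    (fun s => φ s ^ c) =O[l] fun s => |s - τ| ^ (if φ τ = 0 then c else 0) := by
  split_ifs with h
  · exact ((hzero h).rpow (Eventually.of_forall hφ0)
      (Eventually.of_forall fun _ => abs_nonneg _)).isBigO
  · simp only [Real.rpow_zero]
    exact ((hφ.tendsto.mono_left hl).rpow_const (Or.inl h)).isBigO_one ℝ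

theorem prod_rpow_isBigO_abs_sub_rpow {ι : Type*} {A : Finset ι} {φ : ι → ℝ → ℝ} {c : ι → ℝ}
    {K : Set ℝ} {τ : ℝ} (hφ : ∀ i ∈ A, Continuous (φ i)) (hφ0 : ∀ i ∈ A, 0 ≤ φ i)
    (hzero : ∀ i ∈ A, φ i τ = 0 → φ i =Θ[𝓝[K] τ] fun s => |s - τ|) :
    (fun s => ∏ i ∈ A, φ i s ^ c i) =O[𝓝[K \ {τ}] τ]
      fun s => |s - τ| ^ ∑ i ∈ A, if φ i τ = 0 then c i else 0 := by
  have hl : 𝓝[K \ {τ}] τ ≤ 𝓝[K] τ := nhdsWithin_mono _ sdiff_subset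
  refine (IsBigO.finsetProd fun i hi => rpow_isBigO_abs_sub_rpow (hl.trans nhdsWithin_le_nhds)
    (hφ i hi).continuousAt (hφ0 i hi) fun h => (hzero i hi h).mono hl).congr' EventuallyEq.rfl ?_
  filter_upwards [self_mem_nhdsWithin] with s hs
  rw [Real.rpow_sum_of_pos (abs_pos.2 (sub_ne_zero.2 hs.2))]

theorem IsCompact.integrableOn_prod_rpow {ι : Type*} {K : Set ℝ} (hK : IsCompact K)
    {A : Finset ι} {φ : ι → ℝ → ℝ} {c : ι → ℝ} (hφ : ∀ i ∈ A, Continuous (φ i))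
    (hφ0 : ∀ i ∈ A, 0 ≤ φ i)
    (hzero : ∀ i ∈ A, ∀ τ ∈ K, φ i τ = 0 → φ i =Θ[𝓝[K] τ] fun s => |s - τ|)
    (hexp : ∀ τ ∈ K, -1 < ∑ i ∈ A, if φ i τ = 0 then c i else 0) :
    IntegrableOn (fun s => ∏ i ∈ A, φ i s ^ c i) K := by
  refine LocallyIntegrableOn.integrableOn_isCompact (fun τ hτ => ?_) hK
  have : (𝓝[K \ {τ}] τ).IsMeasurablyGenerated :=
    (hK.isClosed.measurableSet.diff (measurableSet_singleton τ)).nhdsWithin_isMeasurablyGenerated τ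
  have hint : IntegrableAtFilter (fun s => ∏ i ∈ A, φ i s ^ c i) (𝓝[K \ {τ}] τ) :=
    (prod_rpow_isBigO_abs_sub_rpow hφ hφ0 fun i hi => hzero i hi τ hτ).integrableAtFilter
      (Finset.measurable_prod A fun i hi =>
        (hφ i hi).measurable.pow_const (c i)).aestronglyMeasurable.stronglyMeasurableAtFilter
      ((integrableAtFilter_abs_sub_rpow (hexp τ hτ) τ).filter_mono nhdsWithin_le_nhds)
  -- removing the null set `{τ}` from the approach region does not affect integrability
  refine IntegrableAtFilter.of_inf_ae (hint.filter_mono ?_)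
  rw [sdiff_eq, nhdsWithin_inter']
  exact inf_le_inf_left _ (le_principal_iff.2 (compl_mem_ae_iff.2 (measure_singleton τ)))

theorem JordanCurve.toFun_eq_toFun_iff (Γ : JordanCurve) {a τ : ℝ} (ha : a ∈ Ico 0 Γ.S)
    (hτ : τ ∈ Icc 0 Γ.S) : Γ.toFun a = Γ.toFun τ ↔ a = if τ = Γ.S then 0 else τ := by
  have key : (if τ = Γ.S then 0 else τ) ∈ Ico 0 Γ.S ∧
      Γ.toFun (if τ = Γ.S then 0 else τ) = Γ.toFun τ := by
    split_ifs with h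
    · refine ⟨⟨le_rfl, Γ.S_pos⟩, ?_⟩
      rw [h]
      simpa using (Γ.periodic 0).symm
    · exact ⟨⟨hτ.1, lt_of_le_of_ne hτ.2 h⟩, rfl⟩
  rw [← key.2]
  exact Γ.injOn.eq_iff ha key.1

theorem HasJumpData.mem_Ico {θ : ℝ → ℝ} {S : ℝ} {r : ℕ} {sk h : ℕ → ℝ}
    (hθ : HasJumpData θ S r sk h) (hS : 0 < S) {k : ℕ} (hk : k ≤ r) : sk k ∈ Ico 0 S := by
  rcases Nat.eq_zero_or_pos k with rfl | hk0
  · rw [hθ.sk_zero]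
    exact ⟨le_rfl, hS⟩
  · exact Ioo_subset_Ico_self (hθ.mem k hk0 hk)

theorem integrableOn_sigmaWeight_rpow_mul_rpow {p : ℝ} {Γ : JordanCurve} (hΓ : Γ.IsLR) {r : ℕ}
    {sk h : ℕ → ℝ} (hsk : ∀ k ≤ r, sk k ∈ Ico 0 Γ.S) {ρ : ℂ → ℝ} {mw : ℕ} {tk ak : ℕ → ℝ}
    (hpw : IsPowerWeight Γ ρ mw tk ak) {κ : ℝ} (hκ : ∀ τ, -1 < κ * betaExp p r sk h mw tk ak τ) :
    IntegrableOn (fun s => sigmaWeight Γ r sk h s ^ (p * κ) * ρ (Γ.toFun s) ^ κ) (Icc 0 Γ.S) := by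
  obtain ⟨htk, -, hρ⟩ := hpw
  let φ : ℕ ⊕ ℕ → ℝ → ℝ :=
    Sum.elim (fun k s => ‖Γ.toFun (sk k) - Γ.toFun s‖) (fun i s => |s - tk i|)
  let c : ℕ ⊕ ℕ → ℝ := Sum.elim (fun k => -h k / (2 * Real.pi) * (p * κ)) (fun i => ak i * κ)
  have hint : IntegrableOn
      (fun s => ∏ j ∈ (Finset.range (r + 1)).disjSum (Finset.Icc 1 mw), φ j s ^ c j)
      (Icc 0 Γ.S) := by
    refine isCompact_Icc.integrableOn_prod_rpow ?_ ?_ ?_ fun τ hτ => ?_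
    · rintro (k | i) -
      · exact (continuous_const.sub Γ.lipschitz.continuous).norm
      · exact (continuous_id.sub continuous_const).abs
    · rintro (k | i) - s
      exacts [norm_nonneg _, abs_nonneg _]
    · rintro (k | i) - τ hτ h0
      · simp only [φ, Sum.elim_inl, norm_eq_zero, sub_eq_zero] at h0 ⊢
        simpa only [h0] using hΓ.isTheta_norm_sub hτ
      · simp only [φ, Sum.elim_inr, abs_eq_zero, sub_eq_zero] at h0 ⊢
        exact h0 ▸ isTheta_rfl
    -- `z(S) = z(0)`, so at `τ = S` the singular factors are those of the point `0`
    set τ' := if τ = Γ.S then 0 else τ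
    have hsing : ∀ k ≤ r, Γ.toFun (sk k) = Γ.toFun τ ↔ sk k = τ' := fun k hk =>
      Γ.toFun_eq_toFun_iff (hsk k hk) hτ
    have hsing' : ∀ i ∈ Finset.Icc 1 mw, τ = tk i ↔ tk i = τ' := by
      intro i hi
      obtain ⟨hi0, hiS⟩ := htk i (Finset.mem_Icc.1 hi).1 (Finset.mem_Icc.1 hi).2
      simp only [τ']
      split_ifs with hτS
      · constructor <;> intro h <;> linarith
      · exact eq_comm
    convert hκ τ' using 1
    rw [Finset.sum_disjSum, betaExp, mul_add, ← mul_assoc, Finset.mul_sum, Finset.mul_sum]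
    congr 1 <;> refine Finset.sum_congr rfl fun j hj => ?_
    · simp only [φ, c, Sum.elim_inl, norm_eq_zero, sub_eq_zero,
        hsing j (Nat.lt_succ_iff.1 (Finset.mem_range.1 hj))]
      split_ifs <;> ring
    · simp only [φ, c, Sum.elim_inr, abs_eq_zero, sub_eq_zero, hsing' j hj]
      split_ifs <;> ring
  refine hint.congr_fun (fun s hs => ?_) measurableSet_Icc
  simp only [Finset.prod_disjSum, φ, c, Sum.elim_inl, Sum.elim_inr, sigmaWeight, hρ s hs]
  rw [← Real.finsetProd_rpow _ _ (fun k _ => by positivity),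
    ← Real.finsetProd_rpow _ _ (fun i _ => by positivity)]
  congr 1 <;> refine Finset.prod_congr rfl fun j _ => ?_ <;> rw [← Real.rpow_mul (by positivity)]

theorem exists_one_lt_forall_mul_mem_Ioo {W : Set ℝ} (hW : W.Finite) {a b : ℝ}
    (h : W ⊆ Ioo a b) : ∃ t > 1, ∀ w ∈ W, t * w ∈ Ioo a b := by
  have : ∀ᶠ t in 𝓝 (1 : ℝ), ∀ w ∈ W, t * w ∈ Ioo a b :=
    hW.eventually_all.2 fun w hw => (continuous_mul_const w).continuousAt.eventually_mem
      (isOpen_Ioo.mem_nhds (by simpa using h hw))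
  obtain ⟨t, htW, ht⟩ :=
    ((this.filter_mono (nhdsWithin_le_nhds (s := Ioi 1))).and self_mem_nhdsWithin).exists
  exact ⟨t, ht, htW⟩

section BetaExp

variable {p q : ℝ} {r : ℕ} {sk h : ℕ → ℝ} {mw : ℕ} {tk ak : ℕ → ℝ}

theorem betaExp_eq_zero {τ : ℝ}
    (hτ : ¬((∃ i ≤ r, sk i = τ) ∨ (∃ i, 1 ≤ i ∧ i ≤ mw ∧ tk i = τ))) :
    betaExp p r sk h mw tk ak τ = 0 := by
  push Not at hτ
  rw [betaExp, Finset.sum_eq_zero fun i hi => if_neg (hτ.1 i (Nat.lt_succ_iff.1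
    (Finset.mem_range.1 hi))), Finset.sum_eq_zero fun i hi => if_neg (hτ.2 i
    (Finset.mem_Icc.1 hi).1 (Finset.mem_Icc.1 hi).2)]
  ring

theorem finite_range_betaExp : (range (betaExp p r sk h mw tk ak)).Finite := by
  set T := (Finset.range (r + 1)).image sk ∪ (Finset.Icc 1 mw).image tk
  refine ((T.finite_toSet.image (betaExp p r sk h mw tk ak)).insert 0).subset ?_
  rintro _ ⟨τ, rfl⟩
  by_cases hτ : (∃ i ≤ r, sk i = τ) ∨ (∃ i, 1 ≤ i ∧ i ≤ mw ∧ tk i = τ)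
  · refine Or.inr ⟨τ, ?_, rfl⟩
    rcases hτ with ⟨i, hi, rfl⟩ | ⟨i, hi1, hi2, rfl⟩
    · simp only [T, Finset.coe_union, Finset.coe_image]
      exact Or.inl ⟨i, by simpa [Nat.lt_succ_iff] using hi, rfl⟩
    · simp only [T, Finset.coe_union, Finset.coe_image]
      exact Or.inr ⟨i, by simpa using ⟨hi1, hi2⟩, rfl⟩
  · exact Or.inl (betaExp_eq_zero hτ)

theorem BetaCond.range_betaExp_subset (hβ : BetaCond p q r sk h mw tk ak) (hpq : 0 < p / q) :
    range (betaExp p r sk h mw tk ak) ⊆ Ioo (-1) (p / q) := by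
  rintro _ ⟨τ, rfl⟩
  by_cases hτ : (∃ i ≤ r, sk i = τ) ∨ (∃ i, 1 ≤ i ∧ i ≤ mw ∧ tk i = τ)
  · exact hβ τ hτ
  · rw [betaExp_eq_zero hτ]
    exact ⟨by norm_num, hpq⟩

end BetaExp

/-- (Example 4.1.)  For a power weight `ρ(z(s)) = Π |s - t_k|^{α_k}` on a curve of class
`LR`, if the combined exponents satisfy `-1 < β_k < p/q` at every singular point, then
the weight `ρ` satisfies condition α). -/
theorem beta_cond_implies_cond_alpha
    (p q : ℝ) (hp : 1 < p) (hq : q = p / (p - 1))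
    (Γ : JordanCurve) (hΓ : Γ.IsLR)
    (θ : ℝ → ℝ) (r : ℕ) (sk h : ℕ → ℝ)
    (hjumps : HasJumpData θ Γ.S r sk h)
    (ρ : ℂ → ℝ) (mw : ℕ) (tk ak : ℕ → ℝ) (hpw : IsPowerWeight Γ ρ mw tk ak)
    (hbeta : BetaCond p q r sk h mw tk ak) :
    CondAlpha Γ ρ p q r sk h := by
  have hp0 : 0 < p := by linarith
  have hq0 : 0 < q := hq ▸ div_pos hp0 (by linarith)
  have hsk : ∀ k ≤ r, sk k ∈ Ico 0 Γ.S := fun k hk => hjumps.mem_Ico Γ.S_pos hk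
  obtain ⟨t, ht, htβ⟩ := exists_one_lt_forall_mul_mem_Ioo finite_range_betaExp
    (hbeta.range_betaExp_subset (div_pos hp0 hq0))
  refine ⟨t, t, ht, ht, integrableOn_sigmaWeight_rpow_mul_rpow hΓ hsk hpw
    fun τ => (htβ _ ⟨τ, rfl⟩).1, ?_⟩
  have hint := integrableOn_sigmaWeight_rpow_mul_rpow (κ := -(q / p) * t) hΓ hsk hpw fun τ => by
    have hlt : q / p * (t * betaExp p r sk h mw tk ak τ) < 1 := by
      calc _ < q / p * (p / q) := mul_lt_mul_of_pos_left (htβ _ ⟨τ, rfl⟩).2 (by positivity)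
        _ = 1 := by field_simp
    rw [mul_assoc, neg_mul]
    exact neg_lt_neg hlt
  rwa [show p * (-(q / p) * t) = -(q * t) by field_simp] at hint
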